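/- arXiv:1801.03968 — 5 statements merged into one kernel-verified Lean document; each statement's English description precedes it below -/
import Mathlib

section
/- The maximum possible number of preference statements in a k-bounded acyclic CP-net over n variables, each of domain size m, equals (n-k)·m^k + (m^k - 1)/(m - 1). Formally: the maximum over all sequences (d_1,...,d_n) of indegrees of an acyclic digraph on n vertices with all indegrees at most k of the sum Σ_i m^{d_i} equals (n-k)·m^k + (m^k-1)/(m-1). -/
/-!
Let the rank of a vertex of an acyclic digraph be its number of ancestors. An edge `u → v`
makes every ancestor of `u`, and `u` itself, an ancestor of `v`, so ranks strictly increase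
along edges. Listing the vertices by increasing rank, the `i`-th vertex (from `0`) thus has
rank, hence indegree, at most `i`, and its weight is at most `m ^ min i k`. Summing gives the
bound, which is attained by joining each vertex to its `k` immediate predecessors in `Fin n`.
-/

open scoped Classical
open Finset Relation

theorem sum_range_pow_min {m : ℕ} (hm : 2 ≤ m) {k n : ℕ} (hk : k ≤ n) :
    ∑ i ∈ range n, m ^ min i k = (n - k) * m ^ k + (m ^ k - 1) / (m - 1) := by
  rw [← sum_range_add_sum_Ico _ hk, ← Nat.geomSum_eq hm, add_comm]
  congr 1
  · rw [← Nat.card_Ico k n, ← smul_eq_mul, ← sum_const]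
    exact sum_congr rfl fun i hi => by rw [min_eq_right (mem_Ico.1 hi).1]
  · exact sum_congr rfl fun i hi => by rw [min_eq_left (mem_range.1 hi).le]

theorem card_filter_tsub_le_and_lt {n : ℕ} (k : ℕ) (v : Fin n) :
    #{u : Fin n | (v : ℕ) - k ≤ u ∧ u < v} = min (v : ℕ) k := by
  have : ({u : Fin n | (v : ℕ) - k ≤ u ∧ u < v} : Finset _).map Fin.valEmbedding
      = Ico ((v : ℕ) - k) v := by
    ext a
    simp only [mem_map, mem_filter, mem_univ, true_and, Fin.valEmbedding_apply, mem_Ico]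
    constructor
    · rintro ⟨u, hu, rfl⟩; exact ⟨hu.1, hu.2⟩
    · intro ha; exact ⟨⟨a, by omega⟩, ha, rfl⟩
  rw [← card_map, this, Nat.card_Ico]
  omega

theorem not_transGen_self_of_lt {α : Type*} [Preorder α] [WellFoundedLT α] {r : α → α → Prop}
    (hr : ∀ u v, r u v → u < v) (v : α) : ¬ TransGen r v v :=
  ((Subrelation.wf (hr _ _) wellFounded_lt).transGen).irrefl.irrefl v

section Ancestors

variable {V : Type*} [Fintype V] (r : V → V → Prop)

noncomputable def ancestorCount (v : V) : ℕ := #{u | TransGen r u v}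

variable {r}

theorem card_filter_le_ancestorCount (v : V) : #{u | r u v} ≤ ancestorCount r v :=
  card_le_card fun _ hu => by simp only [mem_filter, mem_univ, true_and] at hu ⊢; exact .single hu

theorem ancestorCount_lt (hr : ∀ v, ¬ TransGen r v v) {u v : V} (huv : TransGen r u v) :
    ancestorCount r u < ancestorCount r v := by
  refine card_lt_card ⟨fun w hw => ?_, fun h => hr u ?_⟩
  · simp only [mem_filter, mem_univ, true_and] at hw ⊢
    exact hw.trans huv
  · simpa using h (by simpa using huv)

theorem ancestorCount_le_card_lt (hr : ∀ v, ¬ TransGen r v v) (v : V) :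
    ancestorCount r v ≤ #{u | ancestorCount r u < ancestorCount r v} :=
  card_le_card fun _ hu => by
    simp only [mem_filter, mem_univ, true_and] at hu ⊢; exact ancestorCount_lt hr hu

end Ancestors

theorem exists_perm_le_of_le_card_lt {n : ℕ} (h : Fin n → ℕ)
    (hh : ∀ v, h v ≤ #{u | h u < h v}) : ∃ σ : Equiv.Perm (Fin n), ∀ i, h (σ i) ≤ i := by
  refine ⟨Tuple.sort h, fun i => (hh _).trans ?_⟩
  calc #{u | h u < h (Tuple.sort h i)} ≤ #(Iio i) := by
        refine card_le_card_of_injOn (Tuple.sort h).symm (fun u hu => ?_)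
          (Tuple.sort h).symm.injective.injOn
        simp only [coe_filter, mem_univ, true_and, Set.mem_ofPred_eq] at hu
        simp only [coe_Iio, Set.mem_Iio]
        by_contra hle
        have := Tuple.monotone_sort h (not_lt.1 hle)
        simp only [Function.comp_apply, Equiv.apply_symm_apply] at this
        omega
    _ = i := Fin.card_Iio i

theorem sum_pow_card_filter_le {n m k : ℕ} (hm : 1 ≤ m) {r : Fin n → Fin n → Prop}
    (hr : ∀ v, ¬ TransGen r v v) (hk : ∀ v, #{u | r u v} ≤ k) :
    ∑ v, m ^ #{u | r u v} ≤ ∑ i ∈ range n, m ^ min i k := by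
  obtain ⟨σ, hσ⟩ := exists_perm_le_of_le_card_lt _ (ancestorCount_le_card_lt hr)
  rw [← Fin.sum_univ_eq_sum_range (fun i => m ^ min i k), ← Equiv.sum_comp σ]
  exact sum_le_sum fun i _ => pow_le_pow_right₀ hm <|
    le_min ((card_filter_le_ancestorCount _).trans (hσ i)) (hk _)

theorem stmt0_general (n m k : ℕ) (hm : 2 ≤ m) (hk : k ≤ n - 1) :
    IsGreatest
      { S : ℕ | ∃ r : Fin n → Fin n → Prop,
          (∀ v, ¬ Relation.TransGen r v v) ∧
          (∀ v : Fin n, (Finset.univ.filter fun u => r u v).card ≤ k) ∧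
          S = ∑ v : Fin n, m ^ (Finset.univ.filter fun u => r u v).card }
      ((n - k) * m ^ k + (m ^ k - 1) / (m - 1)) := by
  rw [← sum_range_pow_min hm (hk.trans (Nat.sub_le n 1))]
  refine ⟨⟨fun u v => (v : ℕ) - k ≤ u ∧ u < v, not_transGen_self_of_lt fun _ _ h => h.2,
    fun v => by simp only [card_filter_tsub_le_and_lt, min_le_right], ?_⟩, ?_⟩
  · simp only [card_filter_tsub_le_and_lt, ← Fin.sum_univ_eq_sum_range (fun i => m ^ min i k)]
  · rintro S ⟨r, hr, hdeg, rfl⟩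
    exact sum_pow_card_filter_le (by omega) hr hdeg

/-- the maximum weight `∑ v, m ^ indegree(v)` over acyclic digraphs on
`n` vertices with all indegrees at most `k` equals `(n-k)·m^k + (m^k-1)/(m-1)`. -/
theorem stmt0 (n m k : ℕ) (hn : 1 ≤ n) (hm : 2 ≤ m) (hk : k ≤ n - 1) :
    IsGreatest
      { S : ℕ | ∃ r : Fin n → Fin n → Prop,
          (∀ v, ¬ Relation.TransGen r v v) ∧
          (∀ v : Fin n, (Finset.univ.filter fun u => r u v).card ≤ k) ∧
          S = ∑ v : Fin n, m ^ (Finset.univ.filter fun u => r u v).card }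
      ((n - k) * m ^ k + (m ^ k - 1) / (m - 1)) :=
  stmt0_general n m k hm hk
end

section
/- Let S be a finite set of size N ≥ 2 and let C be the class of strict linear orders on S, viewed as concepts over the instance space of ordered pairs of distinct elements of S. Then VCD(C) = N - 1: C shatters some set of N-1 ordered pairs, and shatters no set of N ordered pairs. -/
/-- A concept class `C` shatters `Y` if every subset of `Y` is cut out by some concept. -/
def Shatters {α : Type*} (C : Set (Set α)) (Y : Set α) : Prop :=
  ∀ Z ⊆ Y, ∃ c ∈ C, Y ∩ c = Z

/-- The VC dimension of a concept class: the largest cardinality of a shattered set. -/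
noncomputable def VCD {α : Type*} (C : Set (Set α)) : ℕ :=
  sSup { d : ℕ | ∃ Y : Finset α, Shatters C ↑Y ∧ Y.card = d }

/-- The class of strict linear orders on `α`, viewed as concepts over the
instance space of ordered pairs of distinct elements. -/
def linearOrderClass (α : Type*) : Set (Set { p : α × α // p.1 ≠ p.2 }) :=
  { c | ∃ r : α → α → Prop, Irreflexive r ∧ Transitive r ∧
      (∀ a b : α, a ≠ b → r a b ∨ r b a) ∧ c = { p | r p.val.1 p.val.2 } }

/-!
Forgetting orientations, a set `Y` of pairs shattered by linear orders is the edge set of a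
forest on `α`: no pair occurs in both orientations, and along a cycle one could prescribe the
orientation of every edge to go around the cycle, which no linear order realises. A forest on
`N` vertices has at most `N - 1` edges. Conversely, the `N - 1` edges of a Hamiltonian path are
shattered: for any prescribed orientation, insert the vertices one by one along the path, each
new vertex on top or at the bottom of the previous ones according to the orientation of the
edge leading to it.
-/

namespace SimpleGraph

variable {V : Type*} {G : SimpleGraph V}

theorem IsAcyclic.card_edgeSet_add_one_le [Finite V] [Nonempty V] (hG : G.IsAcyclic) :
    Nat.card G.edgeSet + 1 ≤ Nat.card V := by
  obtain ⟨T, hGT, -, hT⟩ :=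
    (connected_top (V := V)).exists_isTree_le_of_le_of_isAcyclic le_top hG
  rw [← (isTree_iff_connected_and_card.mp hT).2]
  gcongr
  exact Nat.card_mono (Set.toFinite _) (edgeSet_mono hGT)

theorem Walk.rel_of_forall_mem_darts {r : V → V → Prop} [IsTrans V r] {u v : V}
    (w : G.Walk u v) (hw : ¬ w.Nil) (h : ∀ d ∈ w.darts, r d.fst d.snd) : r u v := by
  induction w with
  | nil => exact absurd Walk.Nil.nil hw
  | @cons u v' v hadj p ih =>
    have huv' : r u v' := h ⟨(u, v'), hadj⟩ (by simp)
    by_cases hp : p.Nil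
    · exact hp.eq ▸ huv'
    · exact _root_.trans huv' (ih hp fun d hd => h d (by simp [hd]))

theorem Walk.IsTrail.symm_notMem_darts {u v : V} {w : G.Walk u v} (hw : w.IsTrail)
    {d : G.Dart} (hd : d ∈ w.darts) : d.symm ∉ w.darts := fun hd' =>
  d.symm_ne (List.inj_on_of_nodup_map hw.edges_nodup hd' hd d.edge_symm)

end SimpleGraph

section Upper

variable {α : Type*}

def pairGraph (Y : Set { p : α × α // p.1 ≠ p.2 }) : SimpleGraph α :=
  SimpleGraph.fromRel fun a b => ∃ p ∈ Y, p.val = (a, b)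

theorem edgeSet_pairGraph (Y : Set { p : α × α // p.1 ≠ p.2 }) :
    (pairGraph Y).edgeSet = (fun p => s(p.val.1, p.val.2)) '' Y := by
  ext e
  induction e using Sym2.ind with
  | h a b =>
    simp only [pairGraph, SimpleGraph.mem_edgeSet, SimpleGraph.fromRel_adj, Set.mem_image]
    constructor
    · rintro ⟨-, ⟨p, hp, he⟩ | ⟨p, hp, he⟩⟩ <;> exact ⟨p, hp, by simp [he]⟩
    · rintro ⟨p, hp, he⟩
      rcases Sym2.eq_iff.mp he with ⟨rfl, rfl⟩ | ⟨rfl, rfl⟩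
      · exact ⟨p.2, .inl ⟨p, hp, rfl⟩⟩
      · exact ⟨p.2.symm, .inr ⟨p, hp, rfl⟩⟩

theorem swap_notMem_of_mem_linearOrderClass {c : Set { p : α × α // p.1 ≠ p.2 }}
    (hc : c ∈ linearOrderClass α) {p q : { p : α × α // p.1 ≠ p.2 }} (hp : p ∈ c)
    (hq : q.val = p.val.swap) : q ∉ c := by
  obtain ⟨r, hirr, htr, -, rfl⟩ := hc
  intro hq'
  simp only [Set.mem_ofPred_eq, hq, Prod.fst_swap, Prod.snd_swap] at hp hq'
  exact hirr _ (htr hp hq')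

variable {Y : Set { p : α × α // p.1 ≠ p.2 }}

theorem Shatters.injOn_sym2Mk (h : Shatters (linearOrderClass α) Y) :
    Y.InjOn fun p => s(p.val.1, p.val.2) := by
  intro p hp q hq he
  rcases Sym2.eq_iff.mp he with ⟨h1, h2⟩ | ⟨h1, h2⟩
  · exact Subtype.ext (Prod.ext h1 h2)
  · obtain ⟨c, hc, hYc⟩ := h Y subset_rfl
    have hYc : Y ⊆ c := Set.inter_eq_left.mp hYc
    exact absurd (hYc hq) <|
      swap_notMem_of_mem_linearOrderClass hc (hYc hp) (Prod.ext h2.symm h1.symm)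

theorem Shatters.isAcyclic_pairGraph (h : Shatters (linearOrderClass α) Y) :
    (pairGraph Y).IsAcyclic := by
  intro u c hc
  -- orient every edge of the cycle along the cycle; a linear order realising this is cyclic
  obtain ⟨_, ⟨r, hirr, htr, htot, rfl⟩, hYc⟩ :=
    h {p ∈ Y | ∃ d ∈ c.darts, d.toProd = p.val} (Set.sep_subset _ _)
  have hmem p := Set.ext_iff.mp hYc p
  have hdarts : ∀ d ∈ c.darts, r d.fst d.snd := by
    intro d hd
    obtain ⟨hne, ⟨p, hp, hpd⟩ | ⟨p, hp, hpd⟩⟩ := (SimpleGraph.fromRel_adj _ _ _).mp d.adj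
    · simpa [hpd] using ((hmem p).mpr ⟨hp, d, hd, hpd.symm⟩).2
    · refine (htot _ _ hne).resolve_right fun hr => ?_
      obtain ⟨d', hd', hd'p⟩ := ((hmem p).mp ⟨hp, by simpa [hpd] using hr⟩).2
      have hd'd : d' = d.symm := SimpleGraph.Dart.ext _ _ (by simp [hd'p, hpd, Prod.swap])
      exact hc.isTrail.symm_notMem_darts hd (hd'd ▸ hd')
  have : IsTrans α r := ⟨fun _ _ _ h₁ h₂ => htr h₁ h₂⟩
  exact hirr u (c.rel_of_forall_mem_darts hc.not_nil hdarts)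

theorem Shatters.ncard_add_one_le [Finite α] [Nonempty α] (h : Shatters (linearOrderClass α) Y) :
    Y.ncard + 1 ≤ Nat.card α := by
  have := h.isAcyclic_pairGraph.card_edgeSet_add_one_le
  rwa [Nat.card_coe_set_eq, edgeSet_pairGraph, h.injOn_sym2Mk.ncard_image] at this

end Upper

section Lower

variable {α : Type*}

theorem setOf_lt_mem_linearOrderClass {β : Type*} [LinearOrder β] {f : α → β}
    (hf : Function.Injective f) : {p | f p.val.1 < f p.val.2} ∈ linearOrderClass α :=
  ⟨fun a b => f a < f b, fun a => lt_irrefl (f a), fun _ _ _ => lt_trans,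
    fun _ _ hab => lt_or_gt_of_ne (hf.ne hab), rfl⟩

/-- `zigzag s (k + 1)` lies above all of `zigzag s 0, …, zigzag s k` if `k ∈ s`, below them
otherwise. -/
def zigzag (s : Set ℕ) [DecidablePred (· ∈ s)] : ℕ → ℤ
  | 0 => 0
  | k + 1 => if k ∈ s then k + 1 else -(k + 1)

variable (s : Set ℕ) [DecidablePred (· ∈ s)]

theorem zigzag_succ (k : ℕ) : zigzag s (k + 1) = if k ∈ s then (k + 1 : ℤ) else -(k + 1) := rfl

theorem natAbs_zigzag (k : ℕ) : (zigzag s k).natAbs = k := by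
  cases k with
  | zero => rfl
  | succ k => rw [zigzag_succ]; split_ifs <;> omega

theorem zigzag_injective : Function.Injective (zigzag s) := fun a b h => by
  simpa only [natAbs_zigzag] using congrArg Int.natAbs h

theorem zigzag_lt_zigzag_succ_iff (k : ℕ) : zigzag s k < zigzag s (k + 1) ↔ k ∈ s := by
  have := natAbs_zigzag s k
  rw [zigzag_succ]
  split_ifs with hk <;> simp only [hk, iff_true, iff_false, not_lt] <;> omega

def pathPair {n : ℕ} (e : Fin (n + 1) ≃ α) (i : Fin n) : { p : α × α // p.1 ≠ p.2 } :=
  ⟨(e i.castSucc, e i.succ), e.injective.ne (Fin.castSucc_lt_succ (i := i)).ne⟩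

theorem pathPair_injective {n : ℕ} (e : Fin (n + 1) ≃ α) : Function.Injective (pathPair e) :=
  fun _ _ h => Fin.castSucc_injective _ (e.injective (congrArg (·.val.1) h))

theorem shatters_range_pathPair {n : ℕ} (e : Fin (n + 1) ≃ α) :
    Shatters (linearOrderClass α) (Set.range (pathPair e)) := by
  classical
  intro Z hZ
  set s : Set ℕ := {k | ∃ hk : k < n, pathPair e ⟨k, hk⟩ ∈ Z}
  have hf : Function.Injective fun a => zigzag s (e.symm a) :=
    (zigzag_injective s).comp (Fin.val_injective.comp e.symm.injective)
  have hmem (i : Fin n) : zigzag s (e.symm (pathPair e i).val.1) <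
      zigzag s (e.symm (pathPair e i).val.2) ↔ pathPair e i ∈ Z := by
    simp only [pathPair, Equiv.symm_apply_apply, Fin.val_castSucc, Fin.val_succ,
      zigzag_lt_zigzag_succ_iff]
    exact ⟨fun ⟨_, h⟩ => h, fun h => ⟨i.isLt, h⟩⟩
  refine ⟨_, setOf_lt_mem_linearOrderClass hf, Set.ext fun p => ⟨?_, fun hp => ?_⟩⟩
  · rintro ⟨⟨i, rfl⟩, hi⟩
    exact (hmem i).mp hi
  · obtain ⟨i, rfl⟩ := hZ hp
    exact ⟨⟨i, rfl⟩, (hmem i).mpr hp⟩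

end Lower

/-- for `|S| = N ≥ 2`, the VC dimension of the class of strict linear
orders on `S` over ordered pairs of distinct elements equals `N - 1`. -/
theorem stmt4 {α : Type*} [Fintype α] (hN : 2 ≤ Fintype.card α) :
    VCD (linearOrderClass α) = Fintype.card α - 1 := by
  obtain ⟨n, hn⟩ : ∃ n, Fintype.card α = n + 1 := ⟨_, (Nat.sub_add_cancel (by omega)).symm⟩
  have : Nonempty α := Fintype.card_pos_iff.mp (by omega)
  let e := (Fintype.equivFinOfCardEq hn).symm
  refine IsGreatest.csSup_eq ⟨⟨Finset.univ.map ⟨pathPair e, pathPair_injective e⟩, ?_, ?_⟩, ?_⟩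
  · simpa using shatters_range_pathPair e
  · simp [hn]
  · rintro _ ⟨Y, hY, rfl⟩
    have := hY.ncard_add_one_le
    rw [Set.ncard_coe_finset, Nat.card_eq_fintype_card] at this
    omega
end

section
/- Let X be an instance space of size 5 and C the class of all subsets of X of size at most 3. Then VCD(C) = 3, every concept of size exactly 3 has teaching dimension 3 with respect to C, every concept of size at most 2 has teaching dimension 5 with respect to C, so TD(C) = 5, and RTD(C) = 3. -/
/-- Teaching dimension of a concept `c` w.r.t. class `C`. -/
noncomputable def TDc {α : Type*} (C : Set (Set α)) (c : Set α) : ℕ :=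
  sInf { n | ∃ T : Finset α,
    (∀ c' ∈ C, (∀ x ∈ T, (x ∈ c' ↔ x ∈ c)) → c' = c) ∧ T.card = n }

/-- Teaching dimension of a class. -/
noncomputable def TD {α : Type*} (C : Set (Set α)) : ℕ :=
  sSup { n | ∃ c ∈ C, TDc C c = n }

/-- Minimum teaching dimension over the class. -/
noncomputable def TDmin {α : Type*} (C : Set (Set α)) : ℕ :=
  sInf { n | ∃ c ∈ C, TDc C c = n }

/-- Removing the easiest-to-teach concepts. -/
noncomputable def peel {α : Type*} (C : Set (Set α)) : Set (Set α) :=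
  { c ∈ C | TDc C c ≠ TDmin C }

/-- Recursive teaching dimension. -/
noncomputable def RTD {α : Type*} (C : Set (Set α)) : ℕ :=
  sSup { n | ∃ i : ℕ, (peel^[i] C).Nonempty ∧ TDmin (peel^[i] C) = n }

/-!
In the class `C` of all subsets of size at most `k` of an `n`-element set, a concept `c` of size
exactly `k` is taught by `c` itself: a concept of size at most `k` containing `c` equals `c`, and
every point of `c` must be shown because `c` minus that point is in `C`. A concept of size `< k`
has both neighbours `c \ {x}` and `c ∪ {x}` in `C` for every `x`, so it needs all `n` points.
Hence, when `k < n`, the easiest concepts are those of size `k`; removing them leaves the same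
class with `k - 1` in place of `k`, and the recursive teaching dimension is `k`.
-/

def sizeAtMost (α : Type*) (k : ℕ) : Set (Set α) := {c | c.ncard ≤ k}

@[simp]
lemma mem_sizeAtMost {α : Type*} {k : ℕ} {c : Set α} : c ∈ sizeAtMost α k ↔ c.ncard ≤ k :=
  Iff.rfl

def IsTeachingSet {α : Type*} (C : Set (Set α)) (c : Set α) (T : Finset α) : Prop :=
  ∀ c' ∈ C, (∀ x ∈ T, (x ∈ c' ↔ x ∈ c)) → c' = c

section Teaching

variable {α : Type*} {C : Set (Set α)} {c : Set α} {T : Finset α}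

lemma isTeachingSet_univ [Fintype α] : IsTeachingSet C c Finset.univ :=
  fun _ _ hagree => Set.ext fun x => hagree x (Finset.mem_univ x)

lemma IsTeachingSet.mem_of_ne {x : α} (hT : IsTeachingSet C c T) {c' : Set α} (hc' : c' ∈ C)
    (hne : c' ≠ c) (hagree : ∀ y ≠ x, y ∈ c' ↔ y ∈ c) : x ∈ T := by
  by_contra hx
  exact hne (hT c' hc' fun y hy => hagree y (ne_of_mem_of_not_mem hy hx))

lemma IsTeachingSet.mem_of_sdiff_mem {x : α} (hT : IsTeachingSet C c T) (hx : x ∈ c)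
    (hC : c \ {x} ∈ C) : x ∈ T :=
  hT.mem_of_ne hC (fun h => (h ▸ hx).2 rfl) fun y hy => by simp [hy]

lemma IsTeachingSet.mem_of_insert_mem {x : α} (hT : IsTeachingSet C c T) (hx : x ∉ c)
    (hC : insert x c ∈ C) : x ∈ T :=
  hT.mem_of_ne hC (fun h => hx (h ▸ Set.mem_insert x c)) fun y hy => by simp [hy]

lemma TDc_le (hT : IsTeachingSet C c T) : TDc C c ≤ T.card :=
  Nat.sInf_le ⟨T, hT, rfl⟩

lemma TDc_le_card [Fintype α] : TDc C c ≤ Fintype.card α :=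
  TDc_le isTeachingSet_univ

lemma le_TDc [Fintype α] {m : ℕ} (h : ∀ T, IsTeachingSet C c T → m ≤ T.card) : m ≤ TDc C c :=
  le_csInf ⟨_, Finset.univ, isTeachingSet_univ, rfl⟩ fun _ ⟨T, hT, hn⟩ => hn ▸ h T hT

end Teaching

section SizeAtMost

variable {α : Type*} [Fintype α] {k : ℕ}

lemma exists_ncard_eq (hk : k ≤ Fintype.card α) : ∃ c : Set α, c.ncard = k := by
  obtain ⟨t, -, ht⟩ := Finset.exists_subset_card_eq (s := (Finset.univ : Finset α)) (by simpa)
  exact ⟨t, by simpa⟩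

lemma TDc_sizeAtMost_of_ncard_eq {c : Set α} (hc : c.ncard = k) :
    TDc (sizeAtMost α k) c = k := by
  refine le_antisymm ?_ (le_TDc fun T hT => ?_)
  · have hteach : IsTeachingSet (sizeAtMost α k) c c.toFinite.toFinset := fun c' hc' hagree =>
      (Set.eq_of_subset_of_ncard_le (fun x hx => (hagree x (by simpa)).2 hx)
        (hc.symm ▸ hc')).symm
    calc TDc (sizeAtMost α k) c ≤ _ := TDc_le hteach
      _ = k := by rw [← Set.ncard_eq_toFinset_card c, hc]
  · have hsub : c ⊆ T := fun x hx =>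
      hT.mem_of_sdiff_mem hx ((Set.ncard_le_ncard Set.sdiff_subset).trans hc.le)
    simpa [hc] using Set.ncard_le_ncard hsub

lemma TDc_sizeAtMost_of_ncard_lt {c : Set α} (hc : c.ncard < k) :
    TDc (sizeAtMost α k) c = Fintype.card α := by
  refine le_antisymm TDc_le_card (le_TDc fun T hT => ?_)
  have huniv : T = Finset.univ := Finset.eq_univ_of_forall fun x => by
    by_cases hx : x ∈ c
    · exact hT.mem_of_sdiff_mem hx ((Set.ncard_le_ncard Set.sdiff_subset).trans hc.le)
    · exact hT.mem_of_insert_mem hx (by simpa [Set.ncard_insert_of_notMem hx] using hc)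
  simp [huniv]

lemma TDc_sizeAtMost_ge {c : Set α} (hk : k ≤ Fintype.card α) (hc : c ∈ sizeAtMost α k) :
    k ≤ TDc (sizeAtMost α k) c := by
  rcases (mem_sizeAtMost.1 hc).lt_or_eq with hlt | heq
  · exact (TDc_sizeAtMost_of_ncard_lt hlt).symm ▸ hk
  · exact (TDc_sizeAtMost_of_ncard_eq heq).ge

lemma VCD_sizeAtMost (hk : k ≤ Fintype.card α) : VCD (sizeAtMost α k) = k := by
  refine IsGreatest.csSup_eq ⟨?_, ?_⟩
  · obtain ⟨c, hc⟩ := exists_ncard_eq hk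
    refine ⟨c.toFinite.toFinset, fun Z hZ => ⟨Z, ?_, Set.inter_eq_self_of_subset_right hZ⟩, ?_⟩
    · simpa [hc] using Set.ncard_le_ncard (by simpa using hZ : Z ⊆ c)
    · rw [← Set.ncard_eq_toFinset_card _, hc]
  · rintro d ⟨Y, hY, rfl⟩
    obtain ⟨c, hc, hYc⟩ := hY Y subset_rfl
    have hsub : (Y : Set α) ⊆ c := hYc ▸ Set.inter_subset_right
    simpa using (Set.ncard_le_ncard hsub).trans hc

lemma TD_sizeAtMost (hk : 1 ≤ k) : TD (sizeAtMost α k) = Fintype.card α := by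
  refine IsGreatest.csSup_eq ⟨⟨∅, by simp, ?_⟩, fun _ ⟨_, _, hn⟩ => hn ▸ TDc_le_card⟩
  exact TDc_sizeAtMost_of_ncard_lt (by rwa [Set.ncard_empty])

lemma TDmin_sizeAtMost (hk : k ≤ Fintype.card α) : TDmin (sizeAtMost α k) = k := by
  refine IsLeast.csInf_eq ⟨?_, fun _ ⟨c, hc, hn⟩ => hn ▸ TDc_sizeAtMost_ge hk hc⟩
  obtain ⟨c, hc⟩ := exists_ncard_eq hk
  exact ⟨c, hc.le, TDc_sizeAtMost_of_ncard_eq hc⟩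

lemma peel_sizeAtMost_succ (hk : k + 1 < Fintype.card α) :
    peel (sizeAtMost α (k + 1)) = sizeAtMost α k := by
  ext c
  simp only [peel, TDmin_sizeAtMost hk.le, Set.mem_ofPred_eq, mem_sizeAtMost]
  constructor
  · rintro ⟨hle, hne⟩
    refine Nat.le_of_lt_succ (hle.lt_of_ne fun heq => hne ?_)
    exact TDc_sizeAtMost_of_ncard_eq heq
  · intro hle
    rw [TDc_sizeAtMost_of_ncard_lt (Nat.lt_succ_of_le hle : c.ncard < k + 1)]
    exact ⟨hle.trans k.le_succ, hk.ne'⟩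

lemma peel_sizeAtMost_zero : peel (sizeAtMost α 0) = ∅ :=
  Set.eq_empty_of_forall_notMem fun c ⟨hc, hne⟩ =>
    hne (by rw [TDmin_sizeAtMost (Nat.zero_le _), TDc_sizeAtMost_of_ncard_eq (Nat.le_zero.1 hc)])

lemma peel_iterate_sizeAtMost (i j : ℕ) (h : i + j < Fintype.card α) :
    peel^[i] (sizeAtMost α (i + j)) = sizeAtMost α j := by
  induction i with
  | zero => simp
  | succ i ih =>
    rw [Function.iterate_succ_apply, Nat.add_right_comm, peel_sizeAtMost_succ (by omega),
      ih (by omega)]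

lemma peel_iterate_sizeAtMost_eq_empty (m : ℕ) (hk : k < Fintype.card α) :
    peel^[k + m + 1] (sizeAtMost α k) = ∅ := by
  have hpeeled : peel^[k] (sizeAtMost α k) = sizeAtMost α 0 := peel_iterate_sizeAtMost k 0 hk
  rw [show k + m + 1 = m + 1 + k by omega, Function.iterate_add_apply, hpeeled,
    Function.iterate_succ_apply, peel_sizeAtMost_zero]
  exact Function.iterate_fixed (by simp [peel]) m

lemma RTD_sizeAtMost (hk : k < Fintype.card α) : RTD (sizeAtMost α k) = k := by
  refine IsGreatest.csSup_eq ⟨⟨0, ⟨∅, by simp⟩, TDmin_sizeAtMost hk.le⟩, ?_⟩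
  rintro _ ⟨i, hne, rfl⟩
  rcases le_or_gt i k with hi | hi
  · obtain ⟨j, rfl⟩ := Nat.exists_eq_add_of_le hi
    rw [peel_iterate_sizeAtMost i j hk, TDmin_sizeAtMost (by omega)]
    omega
  · obtain ⟨m, rfl⟩ := Nat.exists_eq_add_of_lt hi
    rw [peel_iterate_sizeAtMost_eq_empty m hk] at hne
    exact absurd hne Set.not_nonempty_empty

end SizeAtMost

/-- over an instance space of size 5, for the class of all subsets of
size at most 3: `VCD = 3`, size-3 concepts have teaching dimension 3, concepts of size
at most 2 have teaching dimension 5, `TD = 5`, and `RTD = 3`. -/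
theorem stmt10 {α : Type*} [Fintype α] (h5 : Fintype.card α = 5) :
    VCD { c : Set α | c.ncard ≤ 3 } = 3 ∧
    (∀ c : Set α, c.ncard = 3 → TDc { c : Set α | c.ncard ≤ 3 } c = 3) ∧
    (∀ c : Set α, c.ncard ≤ 2 → TDc { c : Set α | c.ncard ≤ 3 } c = 5) ∧
    TD { c : Set α | c.ncard ≤ 3 } = 5 ∧
    RTD { c : Set α | c.ncard ≤ 3 } = 3 :=
  ⟨VCD_sizeAtMost (by omega),
    fun _ hc => TDc_sizeAtMost_of_ncard_eq hc,
    fun _ hc => h5 ▸ TDc_sizeAtMost_of_ncard_lt (by omega),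
    h5 ▸ TD_sizeAtMost (by norm_num),
    RTD_sizeAtMost (by omega)⟩
end

section
/- Let C be a concept class over a finite instance space X that is closed under complementation (c ∈ C implies X \ c ∈ C), and let Y ⊆ X be a set not shattered by C. Then for any single concept c over X, the class C ∪ {c} still does not shatter Y. Consequently, if C does not shatter all of X, then C is not maximal: some concept c ∉ C satisfies VCD(C ∪ {c}) = VCD(C). -/
/-- if a (nonempty) concept class `C` is closed under complementation and
`Y` is not shattered by `C`, then adding any single concept still does not shatter `Y`.
Consequently, if `C` does not shatter the whole instance space, `C` is not maximal:
some concept `c ∉ C` satisfies `VCD (C ∪ {c}) = VCD C`. -/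
theorem stmt11 {α : Type*} [Fintype α] (C : Set (Set α)) (hne : C.Nonempty)
    (hcc : ∀ c ∈ C, cᶜ ∈ C) :
    (∀ Y : Set α, ¬ Shatters C Y → ∀ c : Set α, ¬ Shatters (insert c C) Y) ∧
    (¬ Shatters C Set.univ → ∃ c ∉ C, VCD (insert c C) = VCD C) := by
  have hempty : ∀ Y : Set α, Y = ∅ → Shatters C Y := by
    intro Y hY Z hZ
    subst hY
    obtain ⟨c, hc⟩ := hne
    exact ⟨c, hc, by simp [Set.subset_empty_iff.mp hZ]⟩
  have key : ∀ Y : Set α, ¬ Shatters C Y → ∀ c : Set α, ¬ Shatters (insert c C) Y := by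
    intro Y hY c hsh
    rcases Set.eq_empty_or_nonempty Y with hYe | ⟨x, hx⟩
    · exact hY (hempty Y hYe)
    have hY' := hY
    unfold Shatters at hY'
    push_neg at hY'
    obtain ⟨Z, hZY, hZ⟩ := hY'
    have hZ' : ∀ c' ∈ C, Y ∩ c' ≠ Y \ Z := by
      intro c' hc' h
      apply hZ c'ᶜ (hcc c' hc')
      ext y
      have h1 := Set.ext_iff.mp h y
      have h2 : y ∈ Z → y ∈ Y := fun hy => hZY hy
      simp only [Set.mem_inter_iff, Set.mem_diff, Set.mem_compl_iff] at *
      tauto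
    obtain ⟨c1, hc1, hc1e⟩ := hsh Z hZY
    rcases hc1 with rfl | hc1
    · obtain ⟨c2, hc2, hc2e⟩ := hsh (Y \ Z) Set.diff_subset
      rcases hc2 with rfl | hc2
      · -- Y ∩ c = Z and Y ∩ c = Y \ Z
        have : Z = Y \ Z := hc1e ▸ hc2e
        have h1 := Set.ext_iff.mp this x
        have h2 : x ∈ Z → x ∈ Y := fun hy => hZY hy
        simp only [Set.mem_diff] at h1
        tauto
      · exact hZ' c2 hc2 hc2e
    · exact hZ c1 hc1 hc1e
  refine ⟨key, ?_⟩
  intro hns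
  have hns' := hns
  unfold Shatters at hns'
  push_neg at hns'
  obtain ⟨Z, -, hZ⟩ := hns'
  refine ⟨Z, fun h => hZ Z h (by simp), ?_⟩
  unfold VCD
  congr 1
  ext d
  constructor
  · rintro ⟨Y, hsh, hc⟩
    refine ⟨Y, ?_, hc⟩
    by_contra h'
    exact key (↑Y) h' Z hsh
  · rintro ⟨Y, hsh, hc⟩
    exact ⟨Y, fun Z' hZ' => (hsh Z' hZ').imp fun c h => ⟨Set.mem_insert_of_mem _ h.1, h.2⟩, hc⟩
end

section
/- Let C be a concept class over a finite instance space X that is closed under complementation. If C strongly shatters a set Y ⊆ X and Y ≠ X, then C shatters Y ∪ {x} for every x ∈ X \ Y. Consequently, if C is closed under complementation and extremal and VCD(C) < |X|, a contradiction arises; i.e., such a class closed under complementation with VCD(C) < |X| is not extremal. -/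
/-- `C` strongly shatters `Y` if some subfamily of `C` shatters `Y` while all its
members agree on every instance outside `Y`. -/
def StronglyShatters {α : Type*} (C : Set (Set α)) (Y : Set α) : Prop :=
  ∃ C' ⊆ C, Shatters C' Y ∧ ∀ c ∈ C', ∀ c' ∈ C', ∀ x ∉ Y, (x ∈ c ↔ x ∈ c')

/-- `C` is extremal if it strongly shatters every set it shatters. -/
def Extremal {α : Type*} (C : Set (Set α)) : Prop :=
  ∀ Y : Set α, Shatters C Y → StronglyShatters C Y

lemma stmt12_aux {α : Type*} {Y Z c : Set α} {x : α} (hx : x ∉ Y) (hZ : Z ⊆ insert x Y)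
    (h1 : Y ∩ c = Z ∩ Y) (h2 : x ∈ c ↔ x ∈ Z) : insert x Y ∩ c = Z := by
  ext y
  simp only [Set.mem_inter_iff, Set.mem_insert_iff]
  constructor
  · rintro ⟨(rfl | hy), hyc⟩
    · exact h2.mp hyc
    · have : y ∈ Y ∩ c := ⟨hy, hyc⟩
      rw [h1] at this; exact this.1
  · intro hyZ
    rcases hZ hyZ with rfl | hyY
    · exact ⟨Or.inl rfl, h2.mpr hyZ⟩
    · have : y ∈ Z ∩ Y := ⟨hyZ, hyY⟩
      rw [← h1] at this; exact ⟨Or.inr hyY, this.2⟩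

lemma stmt12_part1 {α : Type*} (C : Set (Set α))
    (hcc : ∀ c ∈ C, cᶜ ∈ C) :
    ∀ Y : Set α, StronglyShatters C Y → Y ≠ Set.univ →
      ∀ x ∉ Y, Shatters C (insert x Y) := by
  intro Y hSS _ x hx Z hZ
  obtain ⟨C', hsub, hshat, hagree⟩ := hSS
  obtain ⟨c, hc, hYc⟩ := hshat (Z ∩ Y) Set.inter_subset_right
  by_cases h2 : x ∈ c ↔ x ∈ Z
  · exact ⟨c, hsub hc, stmt12_aux hx hZ hYc h2⟩
  · obtain ⟨c', hc', hYc'⟩ := hshat (Y \ Z) Set.diff_subset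
    refine ⟨c'ᶜ, hcc c' (hsub hc'), stmt12_aux hx hZ ?_ ?_⟩
    · ext y
      have hy : y ∈ Y ∩ c' ↔ y ∈ Y \ Z := by rw [hYc']
      simp only [Set.mem_inter_iff, Set.mem_compl_iff, Set.mem_diff] at *
      tauto
    · have hxc : x ∈ c' ↔ x ∈ c := hagree c' hc' c hc x hx
      simp only [Set.mem_compl_iff]
      tauto

/-- if a (nonempty) class `C` is closed under complementation and strongly
shatters `Y ≠ X`, then `C` shatters `Y ∪ {x}` for every `x ∉ Y`. Consequently a
complement-closed extremal class with `VCD(C) < |X|` yields a contradiction. -/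
theorem stmt12 {α : Type*} [Fintype α] (C : Set (Set α)) (hne : C.Nonempty)
    (hcc : ∀ c ∈ C, cᶜ ∈ C) :
    (∀ Y : Set α, StronglyShatters C Y → Y ≠ Set.univ →
      ∀ x ∉ Y, Shatters C (insert x Y)) ∧
    (Extremal C → VCD C < Fintype.card α → False) := by
  refine ⟨stmt12_part1 C hcc, ?_⟩
  intro hext hvcd
  classical
  have key : ∀ Y : Finset α, StronglyShatters C ↑Y := by
    intro Y
    induction Y using Finset.induction_on with
    | empty =>
      obtain ⟨c0, hc0⟩ := hne
      refine ⟨{c0}, by simpa, ?_, ?_⟩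
      · intro Z hZ
        have : Z = ∅ := Set.subset_empty_iff.mp (by simpa using hZ)
        exact ⟨c0, rfl, by simp [this]⟩
      · intro c hc c' hc' y _
        simp only [Set.mem_singleton_iff] at hc hc'
        subst hc; subst hc'; rfl
    | @insert x Y hxY ih =>
      have hxY' : x ∉ (↑Y : Set α) := by simpa
      have hYne : (↑Y : Set α) ≠ Set.univ := fun h => hxY' (h ▸ Set.mem_univ x)
      have := stmt12_part1 C hcc ↑Y ih hYne x hxY'
      rw [Finset.coe_insert]
      exact hext _ this
  obtain ⟨C', hsub, hshat, _⟩ := key Finset.univ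
  have hmem : Fintype.card α ∈ { d : ℕ | ∃ Y : Finset α, Shatters C ↑Y ∧ Y.card = d } := by
    refine ⟨Finset.univ, ?_, Finset.card_univ⟩
    intro Z hZ
    obtain ⟨c, hc, h⟩ := hshat Z hZ
    exact ⟨c, hsub hc, h⟩
  have hbdd : BddAbove { d : ℕ | ∃ Y : Finset α, Shatters C ↑Y ∧ Y.card = d } := by
    refine ⟨Fintype.card α, ?_⟩
    rintro d ⟨Y, -, rfl⟩
    exact Finset.card_le_univ Y
  have : Fintype.card α ≤ VCD C := le_csSup hbdd hmem
  omega
end
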